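/- Let μ^k, ν^k, μ, ν be probability measures on ℝ with finite first moments such that W₁(μ^k, μ) → 0 and W₁(ν^k, ν) → 0. Let μ ∧_cd ν denote the measure whose put function is the convex hull (largest convex minorant) of min(P_μ, P_ν). Then W₁(μ^k ∧_cd ν^k, μ ∧_cd ν) → 0. -/

import Mathlib

/-!
Since `|P_α - P_β| ≤ W₁(α, β)` and both the pointwise minimum and the largest convex minorant are
1-Lipschitz for the sup norm, the put functions of `σ_k` converge uniformly to that of `σ`.
Uniform convergence of put functions forces `W₁` convergence. A quantile `q_η(u)` is a point
where `u` is a subgradient of `P_η`; adding two such subgradient inequalities sandwiches the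
quantile function of `σ_k` between shifts of that of `σ`, up to an error of order
`sup |P_{σ_k} - P_σ|`, so the quantile functions converge at every continuity point, i.e. a.e. on
`(0, 1)`. The mean is the limit of `x - P_η(x)` at infinity, so means, `P(0)` and hence first
absolute moments converge; Scheffé's lemma then gives `L¹` convergence of the quantile functions,
which bounds `W₁` through the comonotone coupling.
-/

open MeasureTheory ProbabilityTheory Filter

noncomputable section

/-- The set of couplings of two measures on `ℝ`. -/
def Couplings (μ ν : Measure ℝ) : Set (Measure (ℝ × ℝ)) :=
  {π | π.map Prod.fst = μ ∧ π.map Prod.snd = ν}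

/-- Wasserstein-1 distance, defined via couplings. -/
def W1 (μ ν : Measure ℝ) : ℝ :=
  sInf ((fun π : Measure (ℝ × ℝ) => ∫ p, |p.1 - p.2| ∂π) '' Couplings μ ν)

/-- The put function `P_η(x) = ∫ (x - t)⁺ η(dt)`. -/
def put (η : Measure ℝ) (x : ℝ) : ℝ := ∫ t, max (x - t) 0 ∂η

/-- The largest convex minorant (convex hull) of a function on ℝ. -/
def convexMinorant (g : ℝ → ℝ) : ℝ → ℝ :=
  fun x => sSup {y : ℝ | ∃ h : ℝ → ℝ,
    ConvexOn ℝ Set.univ h ∧ (∀ z, h z ≤ g z) ∧ y = h x}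

open Set Topology

lemma put_nonneg (η : Measure ℝ) (x : ℝ) : 0 ≤ put η x :=
  integral_nonneg fun _ => le_max_right _ _

section Put

variable {η : Measure ℝ}

lemma integrable_max_sub_zero [IsFiniteMeasure η] (hη : Integrable (fun t : ℝ => t) η) (x : ℝ) :
    Integrable (fun t => max (x - t) 0) η :=
  ((integrable_const x).sub hη).pos_part

lemma put_sub_put_eq [IsFiniteMeasure η] (hη : Integrable (fun t : ℝ => t) η) (x q : ℝ) :
    put η x - put η q = ∫ t, (max (x - t) 0 - max (q - t) 0) ∂η :=
  (integral_sub (integrable_max_sub_zero hη x) (integrable_max_sub_zero hη q)).symm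

/-- The subdifferential of `put η` at `q` is `[η (Iio q), η (Iic q)]`. -/
lemma mul_sub_le_put_sub_put [IsFiniteMeasure η] (hη : Integrable (fun t : ℝ => t) η)
    {q u : ℝ} (hIio : η.real (Iio q) ≤ u) (hIic : u ≤ η.real (Iic q)) (x : ℝ) :
    u * (x - q) ≤ put η x - put η q := by
  have key : ∀ s : Set ℝ, MeasurableSet s →
      (∀ t, s.indicator (fun _ => x - q) t ≤ max (x - t) 0 - max (q - t) 0) →
      η.real s * (x - q) ≤ put η x - put η q := fun s hs hle => by
    rw [put_sub_put_eq hη, ← smul_eq_mul, ← integral_indicator_const _ hs]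
    exact integral_mono ((integrable_const _).indicator hs)
      ((integrable_max_sub_zero hη x).sub (integrable_max_sub_zero hη q)) hle
  rcases le_total q x with hqx | hxq
  · refine (mul_le_mul_of_nonneg_right hIic (sub_nonneg.2 hqx)).trans
      (key _ measurableSet_Iic fun t => ?_)
    simp only [indicator_apply, mem_Iic]
    split_ifs <;> grind
  · refine (mul_le_mul_of_nonpos_right hIio (sub_nonpos.2 hxq)).trans
      (key _ measurableSet_Iio fun t => ?_)
    simp only [indicator_apply, mem_Iio]
    split_ifs <;> grind

end Put

lemma prod_mem_couplings (α β : Measure ℝ) [IsProbabilityMeasure α] [IsProbabilityMeasure β] :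
    α.prod β ∈ Couplings α β := by
  simp [Couplings]

lemma W1_le_integral {α β : Measure ℝ} {π : Measure (ℝ × ℝ)} (hπ : π ∈ Couplings α β) :
    W1 α β ≤ ∫ p, |p.1 - p.2| ∂π :=
  csInf_le ⟨0, by rintro _ ⟨π', -, rfl⟩; exact integral_nonneg fun _ => abs_nonneg _⟩ ⟨π, hπ, rfl⟩

lemma W1_nonneg (α β : Measure ℝ) [IsProbabilityMeasure α] [IsProbabilityMeasure β] :
    0 ≤ W1 α β :=
  le_csInf ⟨_, _, prod_mem_couplings α β, rfl⟩ <| by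
    rintro _ ⟨π, -, rfl⟩; exact integral_nonneg fun _ => abs_nonneg _

lemma abs_put_sub_put_le_W1 {α β : Measure ℝ} [IsProbabilityMeasure α] [IsProbabilityMeasure β]
    (hα : Integrable (fun t : ℝ => t) α) (hβ : Integrable (fun t : ℝ => t) β) (x : ℝ) :
    |put α x - put β x| ≤ W1 α β := by
  refine le_csInf ⟨_, _, prod_mem_couplings α β, rfl⟩ ?_
  rintro _ ⟨π, ⟨hπ₁, hπ₂⟩, rfl⟩
  have h₁ : put α x = ∫ p, max (x - p.1) 0 ∂π := by
    rw [put, ← hπ₁, integral_map measurable_fst.aemeasurable (by fun_prop)]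
  have h₂ : put β x = ∫ p, max (x - p.2) 0 ∂π := by
    rw [put, ← hπ₂, integral_map measurable_snd.aemeasurable (by fun_prop)]
  have hint₁ : Integrable (fun p : ℝ × ℝ => max (x - p.1) 0) π :=
    (hπ₁ ▸ integrable_max_sub_zero hα x).comp_measurable measurable_fst
  have hint₂ : Integrable (fun p : ℝ × ℝ => max (x - p.2) 0) π :=
    (hπ₂ ▸ integrable_max_sub_zero hβ x).comp_measurable measurable_snd
  have hcost : Integrable (fun p : ℝ × ℝ => |p.1 - p.2|) π :=
    ((hπ₁ ▸ hα).comp_measurable measurable_fst).sub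
      ((hπ₂ ▸ hβ).comp_measurable measurable_snd) |>.abs
  rw [h₁, h₂, ← integral_sub hint₁ hint₂]
  refine abs_integral_le_integral_abs.trans
    (integral_mono (hint₁.sub hint₂).abs hcost fun p => ?_)
  simpa [abs_sub_comm] using abs_max_sub_max_le_abs (x - p.1) (x - p.2) 0

lemma convexMinorant_le_add {f g : ℝ → ℝ} {c : ℝ} (hf : BddBelow (range f))
    (hfg : ∀ x, f x ≤ g x + c) (x : ℝ) : convexMinorant f x ≤ convexMinorant g x + c := by
  obtain ⟨m, hm⟩ := hf
  refine csSup_le ⟨m, fun _ => m, convexOn_const m convex_univ,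
    fun z => hm (mem_range_self z), rfl⟩ ?_
  rintro _ ⟨h, hconv, hhf, rfl⟩
  have hbdd : BddAbove {y : ℝ | ∃ h : ℝ → ℝ,
      ConvexOn ℝ Set.univ h ∧ (∀ z, h z ≤ g z) ∧ y = h x} :=
    ⟨g x, by rintro _ ⟨h', -, hh', rfl⟩; exact hh' x⟩
  have : h x + -c ≤ convexMinorant g x :=
    le_csSup hbdd ⟨_, hconv.add_const (-c), fun z => by
      simp only [Pi.add_apply]; linarith [hhf z, hfg z], rfl⟩
  linarith

lemma abs_convexMinorant_sub_le {f g : ℝ → ℝ} {c : ℝ} (hf : BddBelow (range f))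
    (hg : BddBelow (range g)) (hfg : ∀ x, |f x - g x| ≤ c) (x : ℝ) :
    |convexMinorant f x - convexMinorant g x| ≤ c := by
  have h₁ := convexMinorant_le_add (g := g) (c := c) hf (fun x => by linarith [abs_le.1 (hfg x)]) x
  have h₂ := convexMinorant_le_add (g := f) (c := c) hg (fun x => by linarith [abs_le.1 (hfg x)]) x
  rw [abs_le]; constructor <;> linarith

section Quantile

def quantile (η : Measure ℝ) (u : ℝ) : ℝ :=
  if u ∈ Ioo (0 : ℝ) 1 then sInf {x | u ≤ cdf η x} else 0

variable {η : Measure ℝ} {u x : ℝ}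

lemma bddBelow_setOf_le_cdf (hu : 0 < u) : BddBelow {x | u ≤ cdf η x} := by
  obtain ⟨x₀, hx₀⟩ := ((tendsto_cdf_atBot η).eventually (eventually_lt_nhds hu)).exists
  exact ⟨x₀, fun y hy => not_lt.1 fun hyx => (hy.trans (monotone_cdf η hyx.le)).not_gt hx₀⟩

lemma nonempty_setOf_le_cdf (hu : u < 1) : {x | u ≤ cdf η x}.Nonempty :=
  ((tendsto_cdf_atTop η).eventually (eventually_ge_nhds hu)).exists

lemma quantile_le_iff (hu : u ∈ Ioo 0 1) : quantile η u ≤ x ↔ u ≤ cdf η x := by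
  rw [quantile, if_pos hu]
  refine ⟨fun h => ?_, csInf_le (bddBelow_setOf_le_cdf hu.1)⟩
  refine le_trans ?_ (monotone_cdf η h)
  rw [← (cdf η).iInf_Ioi_eq]
  refine le_ciInf fun ⟨r, hr⟩ => ?_
  obtain ⟨s, hs, hsr⟩ :=
    (csInf_lt_iff (bddBelow_setOf_le_cdf hu.1) (nonempty_setOf_le_cdf hu.2)).1 hr
  exact hs.trans (monotone_cdf η hsr.le)

lemma le_cdf_quantile (hu : u ∈ Ioo 0 1) : u ≤ cdf η (quantile η u) :=
  (quantile_le_iff hu).1 le_rfl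

lemma cdf_lt_of_lt_quantile (hu : u ∈ Ioo 0 1) (hx : x < quantile η u) : cdf η x < u :=
  not_le.1 fun h => hx.not_ge ((quantile_le_iff hu).2 h)

lemma monotoneOn_quantile : MonotoneOn (quantile η) (Ioo 0 1) := fun _ hu _ hv huv =>
  (quantile_le_iff hu).2 (huv.trans (le_cdf_quantile hv))

lemma measurable_quantile : Measurable (quantile η) := by
  refine measurable_of_Iic fun x => ?_
  have : quantile η ⁻¹' Iic x = Ioo 0 1 ∩ Iic (cdf η x) ∪ (Ioo 0 1)ᶜ ∩ {_u | 0 ≤ x} := by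
    ext u
    by_cases hu : u ∈ Ioo (0 : ℝ) 1
    · simp [quantile_le_iff hu, hu]
    · simp [quantile, hu]
  rw [this]
  exact (measurableSet_Ioo.inter measurableSet_Iic).union
    (measurableSet_Ioo.compl.inter (MeasurableSet.const _))

variable [IsProbabilityMeasure η]

lemma measureReal_Iio_quantile_le (hu : u ∈ Ioo 0 1) : η.real (Iio (quantile η u)) ≤ u := by
  have h := (cdf η).measure_Iio (tendsto_cdf_atBot η) (quantile η u)
  rw [measure_cdf, sub_zero] at h
  rw [measureReal_def, h, ENNReal.toReal_ofReal']
  refine max_le (le_of_tendsto ((cdf η).mono.tendsto_leftLim _) ?_) hu.1.le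
  exact eventually_nhdsWithin_of_forall fun s hs => (cdf_lt_of_lt_quantile hu hs).le

lemma map_quantile : (volume.restrict (Ioo 0 1)).map (quantile η) = η := by
  refine Measure.ext_of_Iic _ _ fun x => ?_
  rw [Measure.map_apply measurable_quantile measurableSet_Iic,
    Measure.restrict_apply (measurable_quantile measurableSet_Iic)]
  have : quantile η ⁻¹' Iic x ∩ Ioo 0 1 = Ioo 0 1 ∩ Iic (cdf η x) := by
    ext u
    constructor
    · rintro ⟨h, hu⟩; exact ⟨hu, (quantile_le_iff hu).1 h⟩
    · rintro ⟨hu, h⟩; exact ⟨(quantile_le_iff hu).2 h, hu⟩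
  have hae : (Ioo 0 1 ∩ Iic (cdf η x) : Set ℝ) =ᵐ[volume] (Ioc 0 1 ∩ Iic (cdf η x) : Set ℝ) :=
    Ioo_ae_eq_Ioc.inter (ae_eq_refl _)
  rw [this, ← ofReal_cdf, measure_congr hae, Ioc_inter_Iic,
    min_eq_right (cdf_le_one η x), Real.volume_Ioc, sub_zero]

end Quantile

section QuantileCoupling

variable {η : Measure ℝ} [IsProbabilityMeasure η]

lemma integral_comp_quantile {f : ℝ → ℝ} (hf : AEStronglyMeasurable f η) :
    ∫ u in Ioo 0 1, f (quantile η u) = ∫ t, f t ∂η := by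
  rw [← integral_map measurable_quantile.aemeasurable (by rwa [map_quantile]), map_quantile]

lemma MeasureTheory.Integrable.comp_quantile {f : ℝ → ℝ} (hf : Integrable f η) :
    Integrable (fun u => f (quantile η u)) (volume.restrict (Ioo 0 1)) :=
  (map_quantile (η := η) ▸ hf).comp_measurable measurable_quantile

lemma W1_le_integral_abs_quantile_sub (α β : Measure ℝ) [IsProbabilityMeasure α]
    [IsProbabilityMeasure β] :
    W1 α β ≤ ∫ u in Ioo 0 1, |quantile α u - quantile β u| := by
  have hm : Measurable fun u => (quantile α u, quantile β u) :=
    measurable_quantile.prodMk measurable_quantile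
  refine (W1_le_integral
    (π := (volume.restrict (Ioo 0 1)).map fun u => (quantile α u, quantile β u)) ⟨?_, ?_⟩).trans_eq ?_
  · rw [Measure.map_map measurable_fst hm]; exact map_quantile
  · rw [Measure.map_map measurable_snd hm]; exact map_quantile
  · rw [integral_map hm.aemeasurable (by fun_prop)]

lemma mul_sub_quantile_le_put_sub (hη : Integrable (fun t : ℝ => t) η) {u : ℝ}
    (hu : u ∈ Ioo 0 1) (x : ℝ) :
    u * (x - quantile η u) ≤ put η x - put η (quantile η u) :=
  mul_sub_le_put_sub_put hη (measureReal_Iio_quantile_le hu)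
    (cdf_eq_real η _ ▸ le_cdf_quantile hu) x

end QuantileCoupling

lemma quantile_le_quantile_add {α β : Measure ℝ} [IsProbabilityMeasure α] [IsProbabilityMeasure β]
    (hα : Integrable (fun t : ℝ => t) α) (hβ : Integrable (fun t : ℝ => t) β) {c u v : ℝ}
    (hc : ∀ x, |put α x - put β x| ≤ c) (hu : u ∈ Ioo 0 1) (hv : v ∈ Ioo 0 1) (huv : u < v) :
    quantile α u ≤ quantile β v + 2 * c / (v - u) := by
  have hα' := mul_sub_quantile_le_put_sub hα hu (quantile β v)
  have hβ' := mul_sub_quantile_le_put_sub hβ hv (quantile α u)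
  have hc₁ := abs_le.1 (hc (quantile α u))
  have hc₂ := abs_le.1 (hc (quantile β v))
  rw [← sub_le_iff_le_add', le_div_iff₀ (sub_pos.2 huv)]
  nlinarith

lemma ae_continuousAt_quantile (η : Measure ℝ) :
    ∀ᵐ u ∂volume.restrict (Ioo 0 1), ContinuousAt (quantile η) u := by
  filter_upwards [ae_restrict_of_ae
      ((monotoneOn_quantile (η := η)).countable_not_continuousWithinAt.ae_notMem volume),
    ae_restrict_mem measurableSet_Ioo] with u hcont hu
  exact (not_not.1 fun h => hcont ⟨hu, h⟩).continuousAt (Ioo_mem_nhds hu.1 hu.2)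

lemma tendsto_quantile_of_continuousAt {σk : ℕ → Measure ℝ} {σ : Measure ℝ}
    [∀ k, IsProbabilityMeasure (σk k)] [IsProbabilityMeasure σ]
    (hσk : ∀ k, Integrable (fun t : ℝ => t) (σk k)) (hσ : Integrable (fun t : ℝ => t) σ)
    {ε : ℕ → ℝ} (hε : ∀ k x, |put (σk k) x - put σ x| ≤ ε k) (hε0 : Tendsto ε atTop (𝓝 0))
    {u : ℝ} (hu : u ∈ Ioo 0 1) (hcont : ContinuousAt (quantile σ) u) :
    Tendsto (fun k => quantile (σk k) u) atTop (𝓝 (quantile σ u)) := by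
  have hIoo : Ioo 0 1 ∈ 𝓝 u := Ioo_mem_nhds hu.1 hu.2
  refine tendsto_order.2 ⟨fun a ha => ?_, fun a ha => ?_⟩
  · obtain ⟨v, ⟨hva, hv⟩, hvu⟩ := (((hcont.eventually (lt_mem_nhds ha)).and hIoo).filter_mono
      nhdsWithin_le_nhds |>.and self_mem_nhdsWithin).exists (f := 𝓝[<] u)
    have hlim : Tendsto (fun k => quantile σ v - 2 * ε k / (u - v)) atTop (𝓝 (quantile σ v)) := by
      simpa using tendsto_const_nhds.sub ((hε0.const_mul 2).div_const (u - v))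
    filter_upwards [hlim.eventually (lt_mem_nhds hva)] with k hk
    have := quantile_le_quantile_add hσ (hσk k) (fun x => abs_sub_comm (put σ x) _ ▸ hε k x)
      hv hu hvu
    linarith
  · obtain ⟨v, ⟨hva, hv⟩, huv⟩ := (((hcont.eventually (gt_mem_nhds ha)).and hIoo).filter_mono
      nhdsWithin_le_nhds |>.and self_mem_nhdsWithin).exists (f := 𝓝[>] u)
    have hlim : Tendsto (fun k => quantile σ v + 2 * ε k / (v - u)) atTop (𝓝 (quantile σ v)) := by
      simpa using tendsto_const_nhds.add ((hε0.const_mul 2).div_const (v - u))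
    filter_upwards [hlim.eventually (gt_mem_nhds hva)] with k hk
    exact (quantile_le_quantile_add (hσk k) hσ (hε k) hu hv huv).trans_lt hk

lemma tendsto_integral_norm_sub_of_tendsto_integral_norm {α E : Type*} [MeasurableSpace α]
    {μ : Measure α} [NormedAddCommGroup E] {f : ℕ → α → E} {g : α → E}
    (hf : ∀ n, Integrable (f n) μ) (hg : Integrable g μ)
    (hfg : ∀ᵐ a ∂μ, Tendsto (fun n => f n a) atTop (𝓝 (g a)))
    (hnorm : Tendsto (fun n => ∫ a, ‖f n a‖ ∂μ) atTop (𝓝 (∫ a, ‖g a‖ ∂μ))) :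
    Tendsto (fun n => ∫ a, ‖f n a - g a‖ ∂μ) atTop (𝓝 0) := by
  have hint : ∀ n, Integrable (fun a => ‖f n a‖ + ‖g a‖ - ‖f n a - g a‖) μ :=
    fun n => ((hf n).norm.add hg.norm).sub ((hf n).sub hg).norm
  -- `‖f n‖ + ‖g‖ - ‖f n - g‖` lies in `[0, 2 ‖g‖]`, so dominated convergence applies to it.
  have hdom : Tendsto (fun n => ∫ a, (‖f n a‖ + ‖g a‖ - ‖f n a - g a‖) ∂μ) atTop
      (𝓝 (∫ a, 2 * ‖g a‖ ∂μ)) := by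
    refine tendsto_integral_of_dominated_convergence _ (fun n => (hint n).aestronglyMeasurable)
      (hg.norm.const_mul 2) (fun n => ae_of_all _ fun a => ?_) ?_
    · have h₁ := norm_sub_le (f n a) (g a)
      have h₂ := norm_le_norm_sub_add (f n a) (g a)
      rw [Real.norm_eq_abs, abs_le]
      constructor <;> linarith
    · filter_upwards [hfg] with a ha
      simpa [two_mul] using (ha.norm.add tendsto_const_nhds).sub (ha.sub_const (g a)).norm
  have heq : ∀ n, ∫ a, ‖f n a - g a‖ ∂μ = (∫ a, ‖f n a‖ ∂μ) + (∫ a, ‖g a‖ ∂μ)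
      - ∫ a, (‖f n a‖ + ‖g a‖ - ‖f n a - g a‖) ∂μ := fun n => by
    have h₁ := integral_sub ((hf n).norm.add hg.norm) ((hf n).sub hg).norm
    have h₂ := integral_add (hf n).norm hg.norm
    simp only [Pi.add_apply, Pi.sub_apply] at h₁ h₂
    linarith
  have hlim : (∫ a, ‖g a‖ ∂μ) + (∫ a, ‖g a‖ ∂μ) - ∫ a, 2 * ‖g a‖ ∂μ = 0 := by
    rw [integral_const_mul]; ring
  rw [← hlim]
  simp_rw [heq]
  exact (hnorm.add_const _).sub hdom

section PutConvergence

variable {η : Measure ℝ} [IsProbabilityMeasure η]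

lemma tendsto_put_sub_self (hη : Integrable (fun t : ℝ => t) η) :
    Tendsto (fun x => put η x - x) atTop (𝓝 (-∫ t, t ∂η)) := by
  have heq : ∀ x, put η x - x = ∫ t, max (-t) (-x) ∂η := fun x => by
    have h := integral_sub (integrable_max_sub_zero hη x) (integrable_const x)
    simp only [integral_const, probReal_univ, smul_eq_mul, one_mul] at h
    rw [put, ← h]
    congr with t
    rw [← max_sub_sub_right]
    ring_nf
  simp_rw [heq, ← integral_neg]
  refine tendsto_integral_filter_of_dominated_convergence (fun t => |t|)
    (Eventually.of_forall fun x => by fun_prop) ?_ hη.abs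
    (ae_of_all _ fun t => tendsto_const_nhds.congr' ?_)
  · filter_upwards [eventually_ge_atTop 0] with x hx
    refine ae_of_all _ fun t => ?_
    rw [Real.norm_eq_abs, abs_le]
    exact ⟨(neg_le_neg (le_abs_self t)).trans (le_max_left _ _),
      max_le (neg_le_abs t) (by linarith [abs_nonneg t])⟩
  · filter_upwards [eventually_ge_atTop t] with x hx
    simp [hx]

lemma abs_integral_sub_integral_le_of_abs_put_sub_le {α β : Measure ℝ} [IsProbabilityMeasure α]
    [IsProbabilityMeasure β] (hα : Integrable (fun t : ℝ => t) α)
    (hβ : Integrable (fun t : ℝ => t) β) {c : ℝ} (hc : ∀ x, |put α x - put β x| ≤ c) :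
    |(∫ t, t ∂α) - ∫ t, t ∂β| ≤ c := by
  have h := ((tendsto_put_sub_self hα).sub (tendsto_put_sub_self hβ)).abs
  rw [neg_sub_neg, abs_sub_comm] at h
  exact le_of_tendsto' h fun x => by simpa using hc x

lemma integral_abs_eq_integral_add_two_mul_put_zero (hη : Integrable (fun t : ℝ => t) η) :
    ∫ t, |t| ∂η = (∫ t, t ∂η) + 2 * put η 0 := by
  rw [put, ← integral_const_mul, ← integral_add hη ((integrable_max_sub_zero hη 0).const_mul 2)]
  congr with t
  rcases le_total 0 t with ht | ht
  · simp [abs_of_nonneg ht, ht]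
  · simp [abs_of_nonpos ht, ht]; ring

end PutConvergence

theorem tendsto_W1_of_abs_put_sub_le {σk : ℕ → Measure ℝ} {σ : Measure ℝ}
    [∀ k, IsProbabilityMeasure (σk k)] [IsProbabilityMeasure σ]
    (hσk : ∀ k, Integrable (fun t : ℝ => t) (σk k)) (hσ : Integrable (fun t : ℝ => t) σ)
    {ε : ℕ → ℝ} (hε : ∀ k x, |put (σk k) x - put σ x| ≤ ε k) (hε0 : Tendsto ε atTop (𝓝 0)) :
    Tendsto (fun k => W1 (σk k) σ) atTop (𝓝 0) := by
  have hmean : Tendsto (fun k => ∫ t, t ∂σk k) atTop (𝓝 (∫ t, t ∂σ)) :=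
    tendsto_iff_norm_sub_tendsto_zero.2 <| squeeze_zero (fun _ => norm_nonneg _)
      (fun k => abs_integral_sub_integral_le_of_abs_put_sub_le (hσk k) hσ (hε k)) hε0
  have hput : Tendsto (fun k => put (σk k) 0) atTop (𝓝 (put σ 0)) :=
    tendsto_iff_norm_sub_tendsto_zero.2 <|
      squeeze_zero (fun _ => norm_nonneg _) (fun k => hε k 0) hε0
  have hmoment : Tendsto (fun k => ∫ u in Ioo 0 1, ‖quantile (σk k) u‖) atTop
      (𝓝 (∫ u in Ioo 0 1, ‖quantile σ u‖)) := by
    simp_rw [integral_comp_quantile continuous_norm.aestronglyMeasurable, Real.norm_eq_abs,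
      integral_abs_eq_integral_add_two_mul_put_zero (hσk _),
      integral_abs_eq_integral_add_two_mul_put_zero hσ]
    exact hmean.add (hput.const_mul 2)
  have hae : ∀ᵐ u ∂volume.restrict (Ioo 0 1),
      Tendsto (fun k => quantile (σk k) u) atTop (𝓝 (quantile σ u)) := by
    filter_upwards [ae_continuousAt_quantile σ, ae_restrict_mem measurableSet_Ioo] with u hcont hu
    exact tendsto_quantile_of_continuousAt hσk hσ hε hε0 hu hcont
  have hL1 := tendsto_integral_norm_sub_of_tendsto_integral_norm (fun k => (hσk k).comp_quantile)
    hσ.comp_quantile hae hmoment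
  exact squeeze_zero (fun k => W1_nonneg _ _) (fun k => W1_le_integral_abs_quantile_sub _ _) hL1

theorem W1_convergence_of_cd_min (μk νk : ℕ → Measure ℝ) (μ ν : Measure ℝ)
    [IsProbabilityMeasure μ] [IsProbabilityMeasure ν]
    (hμk : ∀ k, IsProbabilityMeasure (μk k)) (hνk : ∀ k, IsProbabilityMeasure (νk k))
    (hμint : Integrable (fun x : ℝ => x) μ) (hνint : Integrable (fun x : ℝ => x) ν)
    (hμkint : ∀ k, Integrable (fun x : ℝ => x) (μk k))
    (hνkint : ∀ k, Integrable (fun x : ℝ => x) (νk k))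
    (hμW : Tendsto (fun k => W1 (μk k) μ) atTop (nhds 0))
    (hνW : Tendsto (fun k => W1 (νk k) ν) atTop (nhds 0))
    (σk : ℕ → Measure ℝ) (σ : Measure ℝ)
    (hσk : ∀ k, IsProbabilityMeasure (σk k)) (hσ : IsProbabilityMeasure σ)
    (hσkint : ∀ k, Integrable (fun x : ℝ => x) (σk k))
    (hσint : Integrable (fun x : ℝ => x) σ)
    (hputk : ∀ k, ∀ x : ℝ,
      put (σk k) x = convexMinorant (fun s => min (put (μk k) s) (put (νk k) s)) x)
    (hput : ∀ x : ℝ,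
      put σ x = convexMinorant (fun s => min (put μ s) (put ν s)) x) :
    Tendsto (fun k => W1 (σk k) σ) atTop (nhds 0) := by
  have hbdd : ∀ α β : Measure ℝ, BddBelow (range fun s => min (put α s) (put β s)) :=
    fun α β => ⟨0, forall_mem_range.2 fun s => le_min (put_nonneg α s) (put_nonneg β s)⟩
  have hmin : ∀ k s, |min (put (μk k) s) (put (νk k) s) - min (put μ s) (put ν s)| ≤
      max (W1 (μk k) μ) (W1 (νk k) ν) := fun k s =>
    (abs_min_sub_min_le_max _ _ _ _).trans <| max_le_max
      (abs_put_sub_put_le_W1 (hμkint k) hμint s) (abs_put_sub_put_le_W1 (hνkint k) hνint s)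
  refine tendsto_W1_of_abs_put_sub_le hσkint hσint (fun k x => ?_) (by simpa using hμW.max hνW)
  rw [hputk, hput]
  exact abs_convexMinorant_sub_le (hbdd _ _) (hbdd _ _) (hmin k) x
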